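/- Let Φ ∈ ℝⁿˣʳ with ΦᵀΦ = I_r, B_r ∈ ℝʳˣᵐ, Q ∈ ℝⁿˣⁿ symmetric, c ∈ ℝᵈ, and let h: ℝⁿ → ℝᵈ be continuously differentiable with Jacobian J_h(x) ∈ ℝᵈˣⁿ Lipschitz continuous with constant C_Lip[J_h]; set ∇H(x) := Qx + J_h(x)ᵀc and assume ∇H is Lipschitz with constant C_Lip[∇H]. Let ℙ := Ψ(PᵀΨ)⁻¹Pᵀ with Ψ ∈ ℝᵈˣᵐ⁰ having orthonormal columns and P a selection matrix with PᵀΨ invertible. For x ∈ ℝⁿ, x_r ∈ ℝʳ, y ∈ ℝᵐ, and Q_r := ΦᵀQΦ, define y_r := B_rᵀ(Q_r x_r + Φᵀ J_h(Φ x_r)ᵀ ℙᵀ c), φ := y − B_rᵀΦᵀ∇H(x), ρ := x − ΦΦᵀx, ξ := (I − ℙ)J_h(ΦΦᵀx)Φ, θ := ΦΦᵀx − Φx_r, C₄ := ‖B_rᵀΦᵀ‖·C_Lip[∇H], C₅ := ‖B_r‖·‖c‖, and C₆ := ‖B_rᵀΦᵀ‖·(‖Q‖ + C_Lip[J_h]·‖(PᵀΨ)⁻¹‖·‖c‖).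 Then ‖y − y_r‖ ≤ ‖φ‖ + C₄‖ρ‖ + C₅‖ξ‖ + C₆‖θ‖. -/

import Mathlib

open Matrix MeasureTheory RealInnerProductSpace

noncomputable section

/-- Euclidean space `ℝⁿ`. -/
abbrev Evec (n : ℕ) := EuclideanSpace ℝ (Fin n)

/-- Matrix-vector product on Euclidean spaces. -/
def mv {a b : ℕ} (M : Matrix (Fin a) (Fin b) ℝ) (v : Evec b) : Evec a := WithLp.toLp 2 (M.mulVec v)

/-- Spectral (operator) norm of a real matrix, viewed as a linear map between
Euclidean spaces. -/
def spec {a b : ℕ} (M : Matrix (Fin a) (Fin b) ℝ) : ℝ :=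
  ‖LinearMap.toContinuousLinearMap (Matrix.toEuclideanLin M)‖

/-!
With `L = B_rᵀΦᵀ` and `x̂ = ΦΦᵀx`, adding and subtracting `L ∇H(x)` and `L ∇H(x̂)` gives
`y − y_r = φ + L(∇H(x) − ∇H(x̂)) + L Q θ + B_rᵀ ξᵀ c + L (ℙ (J_h(x̂) − J_h(Φx_r)))ᵀ c`,
since `J_h(x̂)ᵀc − J_h(Φx_r)ᵀℙᵀc = ((I − ℙ) J_h(x̂))ᵀc + (ℙ (J_h(x̂) − J_h(Φx_r)))ᵀc`.
The triangle inequality, submultiplicativity and the two Lipschitz bounds then give the estimate;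
the DEIM projector satisfies `‖ℙ‖ ≤ ‖(PᵀΨ)⁻¹‖` because `Ψ` and `P` have orthonormal columns.
-/

theorem Matrix.transpose_mul_self_eq_one_of_selection {ι κ R : Type*} [Fintype ι]
    [DecidableEq ι] [DecidableEq κ] [Semiring R] (P : Matrix ι κ R) {℘ : κ → ι}
    (h℘ : Function.Injective ℘) (hP : ∀ i j, P i j = if i = ℘ j then 1 else 0) :
    Pᵀ * P = 1 := by
  ext j k
  simp [Matrix.mul_apply, hP, Matrix.one_apply, h℘.eq_iff, eq_comm]

section MatrixVector

variable {a b l : ℕ}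

theorem mv_add (M : Matrix (Fin a) (Fin b) ℝ) (u v : Evec b) :
    mv M (u + v) = mv M u + mv M v := by
  simp [mv, Matrix.mulVec_add]

theorem mv_sub (M : Matrix (Fin a) (Fin b) ℝ) (u v : Evec b) :
    mv M (u - v) = mv M u - mv M v := by
  simp [mv, Matrix.mulVec_sub]

theorem sub_mv (M N : Matrix (Fin a) (Fin b) ℝ) (v : Evec b) :
    mv (M - N) v = mv M v - mv N v := by
  simp [mv, Matrix.sub_mulVec]

theorem one_mv (v : Evec a) : mv 1 v = v := by
  simp [mv]

theorem mv_mul (M : Matrix (Fin a) (Fin b) ℝ) (N : Matrix (Fin b) (Fin l) ℝ) (v : Evec l) :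
    mv (M * N) v = mv M (mv N v) := by
  simp [mv, Matrix.mulVec_mulVec]

theorem output_error_decomposition {n r d m : ℕ} (Φ : Matrix (Fin n) (Fin r) ℝ)
    (Br : Matrix (Fin r) (Fin m) ℝ) (Q : Matrix (Fin n) (Fin n) ℝ) (Pbb : Matrix (Fin d) (Fin d) ℝ)
    (J J' : Matrix (Fin d) (Fin n) ℝ) (g z : Evec n) (xr : Evec r) (y : Evec m) (c : Evec d) :
    y - mv Brᵀ (mv (Φᵀ * Q * Φ) xr + mv Φᵀ (mv J'ᵀ (mv Pbbᵀ c))) =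
      (y - mv Brᵀ (mv Φᵀ g)) + (mv (Brᵀ * Φᵀ) (g - (mv Q z + mv Jᵀ c)) +
        mv (Brᵀ * Φᵀ) (mv Q (z - mv Φ xr)) + mv Brᵀ (mv ((1 - Pbb) * J * Φ)ᵀ c) +
        mv (Brᵀ * Φᵀ) (mv (Pbb * (J - J'))ᵀ c)) := by
  simp only [mv_mul, mv_add, mv_sub, sub_mv, one_mv, transpose_mul, transpose_sub, transpose_one]
  abel

end MatrixVector

section SpectralNorm

open scoped Matrix.Norms.L2Operator

variable {a b l : ℕ}

theorem spec_eq_l2_opNorm (M : Matrix (Fin a) (Fin b) ℝ) : spec M = ‖M‖ := rfl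

theorem spec_nonneg (M : Matrix (Fin a) (Fin b) ℝ) : 0 ≤ spec M :=
  norm_nonneg M

theorem norm_mv_le (M : Matrix (Fin a) (Fin b) ℝ) (v : Evec b) : ‖mv M v‖ ≤ spec M * ‖v‖ :=
  Matrix.l2_opNorm_mulVec M v

theorem norm_mv_mv_le (M : Matrix (Fin a) (Fin b) ℝ) (N : Matrix (Fin b) (Fin l) ℝ)
    (v : Evec l) : ‖mv M (mv N v)‖ ≤ spec M * spec N * ‖v‖ :=
  calc ‖mv M (mv N v)‖ ≤ spec M * (spec N * ‖v‖) :=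
        (norm_mv_le M _).trans (mul_le_mul_of_nonneg_left (norm_mv_le N v) (spec_nonneg M))
    _ = spec M * spec N * ‖v‖ := (mul_assoc _ _ _).symm

theorem spec_mul_le (M : Matrix (Fin a) (Fin b) ℝ) (N : Matrix (Fin b) (Fin l) ℝ) :
    spec (M * N) ≤ spec M * spec N :=
  Matrix.l2_opNorm_mul M N

theorem spec_transpose (M : Matrix (Fin a) (Fin b) ℝ) : spec Mᵀ = spec M := by
  rw [spec_eq_l2_opNorm, spec_eq_l2_opNorm, ← conjTranspose_eq_transpose_of_trivial]
  exact Matrix.l2_opNorm_conjTranspose M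

theorem spec_one_le : spec (1 : Matrix (Fin a) (Fin a) ℝ) ≤ 1 :=
  ContinuousLinearMap.opNorm_le_bound _ zero_le_one fun v => by simp

theorem spec_le_one_of_transpose_mul_self {M : Matrix (Fin a) (Fin b) ℝ} (hM : Mᵀ * M = 1) :
    spec M ≤ 1 := by
  have hsq : spec M * spec M ≤ 1 := by
    rw [spec_eq_l2_opNorm, ← Matrix.l2_opNorm_conjTranspose_mul_self,
      conjTranspose_eq_transpose_of_trivial, hM]
    exact spec_one_le
  nlinarith [spec_nonneg M]

theorem spec_mul_mul_transpose_le {k : ℕ} {Ψ P : Matrix (Fin a) (Fin k) ℝ}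
    (hΨ : Ψᵀ * Ψ = 1) (hP : Pᵀ * P = 1) (A : Matrix (Fin k) (Fin k) ℝ) :
    spec (Ψ * A * Pᵀ) ≤ spec A :=
  calc spec (Ψ * A * Pᵀ) ≤ spec Ψ * spec A * spec Pᵀ :=
        (spec_mul_le _ _).trans
          (mul_le_mul_of_nonneg_right (spec_mul_le _ _) (spec_nonneg _))
    _ ≤ 1 * spec A * 1 := by
        rw [spec_transpose]
        have := spec_nonneg A
        have := spec_nonneg P
        gcongr
        exacts [spec_le_one_of_transpose_mul_self hΨ, spec_le_one_of_transpose_mul_self hP]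
    _ = spec A := by ring

end SpectralNorm

theorem pointwise_output_error_split_deim_general {n r d m m0 : ℕ}
    (Φ : Matrix (Fin n) (Fin r) ℝ)
    (Br : Matrix (Fin r) (Fin m) ℝ)
    (Q : Matrix (Fin n) (Fin n) ℝ) (c : Evec d)
    (Jh : Evec n → Matrix (Fin d) (Fin n) ℝ)
    (CLipJ : ℝ) (hLipJ : ∀ a b : Evec n, spec (Jh a - Jh b) ≤ CLipJ * ‖a - b‖)
    (gH : Evec n → Evec n) (hgH : ∀ p, gH p = mv Q p + mv (Jh p)ᵀ c)
    (CLipH : ℝ) (hLipH : ∀ a b : Evec n, ‖gH a - gH b‖ ≤ CLipH * ‖a - b‖)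
    (Ψ P : Matrix (Fin d) (Fin m0) ℝ)
    (hΨ : Ψᵀ * Ψ = 1)
    (hP : ∃ ℘ : Fin m0 → Fin d, Function.Injective ℘ ∧
      ∀ i j, P i j = if i = ℘ j then 1 else 0)
    (Pbb : Matrix (Fin d) (Fin d) ℝ) (hPbb : Pbb = Ψ * (Pᵀ * Ψ)⁻¹ * Pᵀ)
    (Qr : Matrix (Fin r) (Fin r) ℝ) (hQrdef : Qr = Φᵀ * Q * Φ)
    (x : Evec n) (xr : Evec r) (y : Evec m)
    (yr : Evec m)
    (hyr : yr = mv Brᵀ (mv Qr xr + mv Φᵀ (mv (Jh (mv Φ xr))ᵀ (mv Pbbᵀ c))))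
    (φv : Evec m) (hφv : φv = y - mv Brᵀ (mv Φᵀ (gH x)))
    (ρv : Evec n) (hρv : ρv = x - mv Φ (mv Φᵀ x))
    (ξM : Matrix (Fin d) (Fin r) ℝ) (hξM : ξM = (1 - Pbb) * Jh (mv Φ (mv Φᵀ x)) * Φ)
    (θv : Evec n) (hθv : θv = mv Φ (mv Φᵀ x) - mv Φ xr)
    (C₄ C₅ C₆ : ℝ)
    (hC₄ : C₄ = spec (Brᵀ * Φᵀ) * CLipH)
    (hC₅ : C₅ = spec Br * ‖c‖)
    (hC₆ : C₆ = spec (Brᵀ * Φᵀ) * (spec Q + CLipJ * spec ((Pᵀ * Ψ)⁻¹) * ‖c‖)) :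
    ‖y - yr‖ ≤ ‖φv‖ + C₄ * ‖ρv‖ + C₅ * spec ξM + C₆ * ‖θv‖ := by
  set L := Brᵀ * Φᵀ
  set xh := mv Φ (mv Φᵀ x)
  set ΔJ := Jh xh - Jh (mv Φ xr)
  have hsplit : y - yr = φv + (mv L (gH x - gH xh) + mv L (mv Q θv) + mv Brᵀ (mv ξMᵀ c) +
      mv L (mv (Pbb * ΔJ)ᵀ c)) := by
    rw [hyr, hφv, hξM, hθv, hQrdef, hgH xh]
    exact output_error_decomposition ..
  have hρ : ‖mv L (gH x - gH xh)‖ ≤ spec L * (CLipH * ‖ρv‖) :=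
    (norm_mv_le _ _).trans (mul_le_mul_of_nonneg_left (hρv ▸ hLipH x xh) (spec_nonneg L))
  have hξ := norm_mv_mv_le Brᵀ ξMᵀ c
  rw [spec_transpose, spec_transpose] at hξ
  obtain ⟨℘, h℘, hP℘⟩ := hP
  have hΔJ : spec (Pbb * ΔJ)ᵀ ≤ spec (Pᵀ * Ψ)⁻¹ * (CLipJ * ‖θv‖) := by
    rw [spec_transpose]
    refine (spec_mul_le _ _).trans
      (mul_le_mul ?_ (hθv ▸ hLipJ _ _) (spec_nonneg _) (spec_nonneg _))
    exact hPbb ▸ spec_mul_mul_transpose_le hΨ (P.transpose_mul_self_eq_one_of_selection h℘ hP℘) _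
  have hJθ : ‖mv L (mv (Pbb * ΔJ)ᵀ c)‖ ≤ spec L * (spec (Pᵀ * Ψ)⁻¹ * (CLipJ * ‖θv‖)) * ‖c‖ :=
    (norm_mv_mv_le L _ c).trans (by gcongr; exact spec_nonneg L)
  have hQθ := norm_mv_mv_le L Q θv
  have htriangle : ‖y - yr‖ ≤ ‖φv‖ + (‖mv L (gH x - gH xh)‖ + ‖mv L (mv Q θv)‖ +
      ‖mv Brᵀ (mv ξMᵀ c)‖ + ‖mv L (mv (Pbb * ΔJ)ᵀ c)‖) := by
    rw [hsplit]
    exact (norm_add_le _ _).trans (add_le_add_right norm_add₄_le _)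
  subst hC₄ hC₅ hC₆
  linarith

/-- Pointwise splitting of the pH-OpInf-DEIM output error:
with `y_r = B_rᵀ(Q_r x_r + Φᵀ J_h(Φ x_r)ᵀ ℙᵀ c)`, `φ = y − B_rᵀΦᵀ∇H(x)`,
`ρ = x − ΦΦᵀx`, `ξ = (I − ℙ)J_h(ΦΦᵀx)Φ` and `θ = ΦΦᵀx − Φx_r`,
`‖y − y_r‖ ≤ ‖φ‖ + C₄‖ρ‖ + C₅‖ξ‖ + C₆‖θ‖`. -/
theorem pointwise_output_error_split_deim {n r d m m0 : ℕ}
    (Φ : Matrix (Fin n) (Fin r) ℝ) (hΦ : Φᵀ * Φ = 1)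
    (Br : Matrix (Fin r) (Fin m) ℝ)
    (Q : Matrix (Fin n) (Fin n) ℝ) (hQ : Qᵀ = Q) (c : Evec d)
    (h : Evec n → Evec d) (Jh : Evec n → Matrix (Fin d) (Fin n) ℝ)
    (hJac : ∀ p, HasFDerivAt h
      (LinearMap.toContinuousLinearMap (Matrix.toEuclideanLin (Jh p))) p)
    (CLipJ : ℝ) (hLipJ : ∀ a b : Evec n, spec (Jh a - Jh b) ≤ CLipJ * ‖a - b‖)
    (gH : Evec n → Evec n) (hgH : ∀ p, gH p = mv Q p + mv (Jh p)ᵀ c)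
    (CLipH : ℝ) (hLipH : ∀ a b : Evec n, ‖gH a - gH b‖ ≤ CLipH * ‖a - b‖)
    (Ψ P : Matrix (Fin d) (Fin m0) ℝ)
    (hΨ : Ψᵀ * Ψ = 1)
    (hP : ∃ ℘ : Fin m0 → Fin d, Function.Injective ℘ ∧
      ∀ i j, P i j = if i = ℘ j then 1 else 0)
    (hPΨ : IsUnit (Pᵀ * Ψ))
    (Pbb : Matrix (Fin d) (Fin d) ℝ) (hPbb : Pbb = Ψ * (Pᵀ * Ψ)⁻¹ * Pᵀ)
    (Qr : Matrix (Fin r) (Fin r) ℝ) (hQrdef : Qr = Φᵀ * Q * Φ)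
    (x : Evec n) (xr : Evec r) (y : Evec m)
    (yr : Evec m)
    (hyr : yr = mv Brᵀ (mv Qr xr + mv Φᵀ (mv (Jh (mv Φ xr))ᵀ (mv Pbbᵀ c))))
    (φv : Evec m) (hφv : φv = y - mv Brᵀ (mv Φᵀ (gH x)))
    (ρv : Evec n) (hρv : ρv = x - mv Φ (mv Φᵀ x))
    (ξM : Matrix (Fin d) (Fin r) ℝ) (hξM : ξM = (1 - Pbb) * Jh (mv Φ (mv Φᵀ x)) * Φ)
    (θv : Evec n) (hθv : θv = mv Φ (mv Φᵀ x) - mv Φ xr)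
    (C₄ C₅ C₆ : ℝ)
    (hC₄ : C₄ = spec (Brᵀ * Φᵀ) * CLipH)
    (hC₅ : C₅ = spec Br * ‖c‖)
    (hC₆ : C₆ = spec (Brᵀ * Φᵀ) * (spec Q + CLipJ * spec ((Pᵀ * Ψ)⁻¹) * ‖c‖)) :
    ‖y - yr‖ ≤ ‖φv‖ + C₄ * ‖ρv‖ + C₅ * spec ξM + C₆ * ‖θv‖ :=
  pointwise_output_error_split_deim_general Φ Br Q c Jh CLipJ hLipJ gH hgH CLipH hLipH Ψ P hΨ hP Pbb
    hPbb Qr hQrdef x xr y yr hyr φv hφv ρv hρv ξM hξM θv hθv C₄ C₅ C₆ hC₄ hC₅ hC₆
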